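/- Let A ⊆ B(G_μ) and B ⊆ B(G_ν) be von Neumann algebras with cyclic and separating unit vectors Λ_μ, Λ_ν defining faithful normal states μ, ν, let ω be a coupling of (A, μ) and (B, ν) with cyclic representation (H_ω, π_ω, Ω_ω), and let E_ω : A → B be the associated map. Define ω′ on B′ ⊙ A by ω′(b′ ⊗ a) := ω(a ⊗ b′). Then ω′ is a coupling of (B′, ν′) and (A′, μ′) (where μ′(a′) = ⟨Λ_μ, a′Λ_μ⟩ on A′, and the commutant of A′ is A), the map it determines satisfies E_{ω′} = E_ω′, the dual of E_ω, and moreover E_{ω′}(b′) = u_μ* ι_{H_μ}* π_ω(1 ⊗ b′) ι_{H_μ} u_μ for all b′ ∈ B′, where H_μ is the closure of π_ω(A ⊗ 1)Ω_ω, ι_{H_μ} : H_μ → H_ω is the inclusion, and u_μ : G_μ → H_μ is the unitary with u_μ aΛ_μ = π_ω(a ⊗ 1)Ω_ω for a ∈ A. -/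

import Mathlib

/-
Everything reduces to matrix coefficients against the cyclic vectors. Swapping the tensor
factors preserves positivity and the marginals, and `A′′ = A` lets elements of the double
commutant be read as elements of `A`. For `T` in a commutant, `⟪a₁ Λ, T a₂ Λ⟫ = ⟪Λ, T (a₁* a₂) Λ⟫`;
applied both to `E_{ω′}(b′) ∈ A′` on `G_μ` and to `π_ω(1 ⊗ b′)`, which commutes with
`π_ω(A ⊗ 1)`, on `H_ω`, it shows that `E_{ω′}(b′)` and `u_μ* π_ω(1 ⊗ b′) u_μ` have the same
coefficients `ω(a₁* a₂ ⊗ b′)` on the dense set `A Λ_μ`, hence coincide.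
-/

open scoped ComplexOrder

noncomputable section

noncomputable instance {H : Type} [NormedAddCommGroup H] [InnerProductSpace ℂ H]
    [CompleteSpace H] (A : VonNeumannAlgebra H) : Algebra ℂ ↥A :=
  inferInstanceAs (Algebra ℂ ↥A.toStarSubalgebra)

variable {Gμ Gν Hw : Type}
  [NormedAddCommGroup Gμ] [InnerProductSpace ℂ Gμ] [CompleteSpace Gμ]
  [NormedAddCommGroup Gν] [InnerProductSpace ℂ Gν] [CompleteSpace Gν]
  [NormedAddCommGroup Hw] [InnerProductSpace ℂ Hw] [CompleteSpace Hw]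

/-- A coupling of `(A, μ)` and `(B, ν)`: a state on the algebraic tensor product `A ⊙ B′`
(equivalently, a bilinear functional, positive on elements of the form `x* x`) whose
marginals are `μ` and `ν′`. -/
def IsCoupling {Gμ Gν : Type}
    [NormedAddCommGroup Gμ] [InnerProductSpace ℂ Gμ] [CompleteSpace Gμ]
    [NormedAddCommGroup Gν] [InnerProductSpace ℂ Gν] [CompleteSpace Gν]
    (A : VonNeumannAlgebra Gμ) (B : VonNeumannAlgebra Gν) (Λμ : Gμ) (Λν : Gν)
    (ω : ↥A →ₗ[ℂ] ↥B.commutant →ₗ[ℂ] ℂ) : Prop :=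
  (∀ (n : ℕ) (a : Fin n → ↥A) (b : Fin n → ↥B.commutant),
      0 ≤ ∑ i, ∑ j, ω (star (a i) * a j) (star (b i) * b j)) ∧
  (∀ a : ↥A, ω a 1 = inner ℂ Λμ ((a : Gμ →L[ℂ] Gμ) Λμ)) ∧
  (∀ b' : ↥B.commutant, ω 1 b' = inner ℂ Λν ((b' : Gν →L[ℂ] Gν) Λν))


theorem ContinuousLinearMap.ext_of_denseRange_inner {𝕜 E ι : Type*} [RCLike 𝕜]
    [NormedAddCommGroup E] [InnerProductSpace 𝕜 E] {v : ι → E} (hv : DenseRange v)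
    {T S : E →L[𝕜] E} (h : ∀ i j, inner 𝕜 (v i) (T (v j)) = inner 𝕜 (v i) (S (v j))) :
    T = S := by
  have hTS : T ∘ v = S ∘ v :=
    funext fun j => hv.eq_of_inner_right 𝕜 fun i => h i j
  exact DFunLike.coe_injective (hv.equalizer T.continuous S.continuous hTS)

theorem StarAlgHom.inner_apply_apply_of_commute {A H : Type} [Semiring A] [StarRing A]
    [Algebra ℂ A] [NormedAddCommGroup H] [InnerProductSpace ℂ H] [CompleteSpace H]
    (π : A →⋆ₐ[ℂ] (H →L[ℂ] H)) {T : H →L[ℂ] H} {a₁ : A} (hT : Commute (π (star a₁)) T)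
    (a₂ : A) (Ω : H) :
    inner ℂ (π a₁ Ω) (T (π a₂ Ω)) = inner ℂ Ω (T (π (star a₁ * a₂) Ω)) := by
  rw [← ContinuousLinearMap.adjoint_inner_right, ← ContinuousLinearMap.star_eq_adjoint,
    ← map_star, map_mul, mul_apply_eq_comp, ← mul_apply_eq_comp, hT.eq]
  rfl

namespace VonNeumannAlgebra

variable {H : Type} [NormedAddCommGroup H] [InnerProductSpace ℂ H] [CompleteSpace H]

theorem inner_apply_apply_of_mem_commutant (A : VonNeumannAlgebra H) {T : H →L[ℂ] H}
    (hT : T ∈ A.commutant) (a₁ a₂ : ↥A) (Λ : H) :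
    inner ℂ ((a₁ : H →L[ℂ] H) Λ) (T ((a₂ : H →L[ℂ] H) Λ))
      = inner ℂ Λ (T (((star a₁ * a₂ : ↥A) : H →L[ℂ] H) Λ)) :=
  A.toStarSubalgebra.subtype.inner_apply_apply_of_commute
    (mem_commutant_iff.mp hT _ (star a₁).2) a₂ Λ

def ofCommutantCommutant (A : VonNeumannAlgebra H) (x : ↥A.commutant.commutant) : ↥A :=
  ⟨x, (SetLike.ext_iff.mp A.commutant_commutant _).mp x.2⟩

def toCommutantCommutant (A : VonNeumannAlgebra H) (a : ↥A) : ↥A.commutant.commutant :=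
  ⟨a, (SetLike.ext_iff.mp A.commutant_commutant _).mpr a.2⟩

end VonNeumannAlgebra

open VonNeumannAlgebra

theorem IsCoupling.swap {A : VonNeumannAlgebra Gμ} {B : VonNeumannAlgebra Gν} {Λμ : Gμ}
    {Λν : Gν} {ω : ↥A →ₗ[ℂ] ↥B.commutant →ₗ[ℂ] ℂ} (hω : IsCoupling A B Λμ Λν ω)
    {ω' : ↥B.commutant →ₗ[ℂ] ↥A.commutant.commutant →ₗ[ℂ] ℂ}
    (hω' : ∀ (b' : ↥B.commutant) (x : ↥A.commutant.commutant) (a : ↥A),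
      (x : Gμ →L[ℂ] Gμ) = (a : Gμ →L[ℂ] Gμ) → ω' b' x = ω a b') :
    IsCoupling B.commutant A.commutant Λν Λμ ω' := by
  obtain ⟨hpos, hμ, hν⟩ := hω
  have hω'' (b' : ↥B.commutant) (x : ↥A.commutant.commutant) :
      ω' b' x = ω (A.ofCommutantCommutant x) b' :=
    hω' b' x _ rfl
  refine ⟨fun n b x => ?_, fun b' => (hω' b' 1 1 rfl).trans (hν b'), fun x => ?_⟩
  · simp only [hω'']
    exact hpos n (A.ofCommutantCommutant ∘ x) b
  · exact (hω'' 1 x).trans (hμ _)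

theorem swapped_coupling_dual_general
    (A : VonNeumannAlgebra Gμ) (B : VonNeumannAlgebra Gν) (Λμ : Gμ) (Λν : Gν)
    (hΛμcyc : Dense (Set.range fun a : ↥A => (a : Gμ →L[ℂ] Gμ) Λμ))
    (ω : ↥A →ₗ[ℂ] ↥B.commutant →ₗ[ℂ] ℂ) (hω : IsCoupling A B Λμ Λν ω)
    -- a cyclic representation of `(A ⊙ B′, ω)`
    (π₁ : ↥A →⋆ₐ[ℂ] (Hw →L[ℂ] Hw)) (π₂ : ↥B.commutant →⋆ₐ[ℂ] (Hw →L[ℂ] Hw)) (Ωw : Hw)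
    (hcomm : ∀ (a : ↥A) (b' : ↥B.commutant), Commute (π₁ a) (π₂ b'))
    (hrep : ∀ (a : ↥A) (b' : ↥B.commutant), ω a b' = inner ℂ Ωw (π₁ a (π₂ b' Ωw)))
    -- the map `E_ω` associated to `ω`
    (E : ↥A → ↥B)
    (hE : ∀ (a : ↥A) (b' : ↥B.commutant),
      ω a b' = inner ℂ Λν ((E a : Gν →L[ℂ] Gν) ((b' : Gν →L[ℂ] Gν) Λν)))
    -- the swapped functional `ω′` on `B′ ⊙ A = B′ ⊙ (A′)′`
    (ω' : ↥B.commutant →ₗ[ℂ] ↥A.commutant.commutant →ₗ[ℂ] ℂ)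
    (hω' : ∀ (b' : ↥B.commutant) (x : ↥A.commutant.commutant) (a : ↥A),
      (x : Gμ →L[ℂ] Gμ) = (a : Gμ →L[ℂ] Gμ) → ω' b' x = ω a b')
    -- the unitary `u_μ : G_μ → H_μ ⊆ H_ω`
    (uμ : Gμ →L[ℂ] Hw)
    (huμ : ∀ a : ↥A, uμ ((a : Gμ →L[ℂ] Gμ) Λμ) = π₁ a Ωw) :
    -- `ω′` is a coupling of `(B′, ν′)` and `(A′, μ′)` ...
    IsCoupling B.commutant A.commutant Λν Λμ ω' ∧
    -- ... whose associated map `E_{ω′}` is the dual of `E_ω` and is given by compression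
    (∀ E' : ↥B.commutant → ↥A.commutant,
      (∀ (b' : ↥B.commutant) (x : ↥A.commutant.commutant),
        ω' b' x = inner ℂ Λμ ((E' b' : Gμ →L[ℂ] Gμ) ((x : Gμ →L[ℂ] Gμ) Λμ))) →
      (∀ (a : ↥A) (b' : ↥B.commutant),
        (inner ℂ Λμ ((a : Gμ →L[ℂ] Gμ) ((E' b' : Gμ →L[ℂ] Gμ) Λμ)) : ℂ)
          = inner ℂ Λν ((E a : Gν →L[ℂ] Gν) ((b' : Gν →L[ℂ] Gν) Λν))) ∧
      (∀ b' : ↥B.commutant,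
        (E' b' : Gμ →L[ℂ] Gμ)
          = (ContinuousLinearMap.adjoint uμ).comp ((π₂ b').comp uμ))) := by
  refine ⟨hω.swap hω', fun E' hE' => ?_⟩
  have hE'ω (a : ↥A) (b' : ↥B.commutant) :
      inner ℂ Λμ ((E' b' : Gμ →L[ℂ] Gμ) ((a : Gμ →L[ℂ] Gμ) Λμ)) = ω a b' :=
    (hE' b' (A.toCommutantCommutant a)).symm.trans (hω' b' _ a rfl)
  refine ⟨fun a b' => ?_, fun b' => ?_⟩
  · rw [← hE, ← hE'ω]
    exact congrArg _ (DFunLike.congr_fun (mem_commutant_iff.mp (E' b').2 a a.2) Λμ)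
  · refine ContinuousLinearMap.ext_of_denseRange_inner hΛμcyc fun a₁ a₂ => ?_
    rw [A.inner_apply_apply_of_mem_commutant (E' b').2, hE'ω, ContinuousLinearMap.comp_apply,
      ContinuousLinearMap.adjoint_inner_right, ContinuousLinearMap.comp_apply, huμ, huμ,
      π₁.inner_apply_apply_of_commute (hcomm _ b'), hrep]
    exact congrArg _ (DFunLike.congr_fun (hcomm _ b').eq Ωw)

/-- For a coupling `ω` of `(A, μ)` and `(B, ν)`, the functional
`ω′(b′ ⊗ a) := ω(a ⊗ b′)` on `B′ ⊙ A` is a coupling of `(B′, ν′)` and `(A′, μ′)` (the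
commutant of `A′` being `A`), its associated map is the dual `E_ω′` of `E_ω`, and
`E_{ω′}(b′) = u_μ* ι* π_ω(1 ⊗ b′) ι u_μ`. -/
theorem swapped_coupling_dual
    (A : VonNeumannAlgebra Gμ) (B : VonNeumannAlgebra Gν) (Λμ : Gμ) (Λν : Gν)
    (hΛμunit : ‖Λμ‖ = 1) (hΛνunit : ‖Λν‖ = 1)
    (hΛμcyc : Dense (Set.range fun a : ↥A => (a : Gμ →L[ℂ] Gμ) Λμ))
    (hΛμsep : ∀ a : ↥A, (a : Gμ →L[ℂ] Gμ) Λμ = 0 → a = 0)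
    (hΛνcyc : Dense (Set.range fun b : ↥B => (b : Gν →L[ℂ] Gν) Λν))
    (hΛνsep : ∀ b : ↥B, (b : Gν →L[ℂ] Gν) Λν = 0 → b = 0)
    (ω : ↥A →ₗ[ℂ] ↥B.commutant →ₗ[ℂ] ℂ) (hω : IsCoupling A B Λμ Λν ω)
    -- a cyclic representation of `(A ⊙ B′, ω)`
    (π₁ : ↥A →⋆ₐ[ℂ] (Hw →L[ℂ] Hw)) (π₂ : ↥B.commutant →⋆ₐ[ℂ] (Hw →L[ℂ] Hw)) (Ωw : Hw)
    (hcomm : ∀ (a : ↥A) (b' : ↥B.commutant), Commute (π₁ a) (π₂ b'))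
    (hcyc : Dense (Submodule.span ℂ
      (Set.range fun p : ↥A × ↥B.commutant => π₁ p.1 (π₂ p.2 Ωw)) : Set Hw))
    (hrep : ∀ (a : ↥A) (b' : ↥B.commutant), ω a b' = inner ℂ Ωw (π₁ a (π₂ b' Ωw)))
    -- the map `E_ω` associated to `ω`
    (E : ↥A → ↥B)
    (hE : ∀ (a : ↥A) (b' : ↥B.commutant),
      ω a b' = inner ℂ Λν ((E a : Gν →L[ℂ] Gν) ((b' : Gν →L[ℂ] Gν) Λν)))
    -- the swapped functional `ω′` on `B′ ⊙ A = B′ ⊙ (A′)′`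
    (ω' : ↥B.commutant →ₗ[ℂ] ↥A.commutant.commutant →ₗ[ℂ] ℂ)
    (hω' : ∀ (b' : ↥B.commutant) (x : ↥A.commutant.commutant) (a : ↥A),
      (x : Gμ →L[ℂ] Gμ) = (a : Gμ →L[ℂ] Gμ) → ω' b' x = ω a b')
    -- the unitary `u_μ : G_μ → H_μ ⊆ H_ω`
    (uμ : Gμ →L[ℂ] Hw) (huμiso : ∀ ξ : Gμ, ‖uμ ξ‖ = ‖ξ‖)
    (huμ : ∀ a : ↥A, uμ ((a : Gμ →L[ℂ] Gμ) Λμ) = π₁ a Ωw)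
    (huμrange : Set.range uμ = closure (Set.range fun a : ↥A => π₁ a Ωw)) :
    -- `ω′` is a coupling of `(B′, ν′)` and `(A′, μ′)` ...
    IsCoupling B.commutant A.commutant Λν Λμ ω' ∧
    -- ... whose associated map `E_{ω′}` is the dual of `E_ω` and is given by compression
    (∀ E' : ↥B.commutant → ↥A.commutant,
      (∀ (b' : ↥B.commutant) (x : ↥A.commutant.commutant),
        ω' b' x = inner ℂ Λμ ((E' b' : Gμ →L[ℂ] Gμ) ((x : Gμ →L[ℂ] Gμ) Λμ))) →
      (∀ (a : ↥A) (b' : ↥B.commutant),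
        (inner ℂ Λμ ((a : Gμ →L[ℂ] Gμ) ((E' b' : Gμ →L[ℂ] Gμ) Λμ)) : ℂ)
          = inner ℂ Λν ((E a : Gν →L[ℂ] Gν) ((b' : Gν →L[ℂ] Gν) Λν))) ∧
      (∀ b' : ↥B.commutant,
        (E' b' : Gμ →L[ℂ] Gμ)
          = (ContinuousLinearMap.adjoint uμ).comp ((π₂ b').comp uμ))) :=
  swapped_coupling_dual_general A B Λμ Λν hΛμcyc ω hω π₁ π₂ Ωw hcomm hrep E hE ω' hω' uμ huμ
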